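/- arXiv:1203.1804 — 2 statements merged into one kernel-verified Lean document; each statement's English description precedes it below -/
import Mathlib

section
/- Let n be a power of 2 with s0 = log₂ n, let m ≥ 2·s0, and define m_s = ⌊(m - s0) · s · 2^{-(s+1)}⌋ + 1 for s = 1,…,s0. Then ∑_{s=1}^{s0} m_s ≤ m. -/
/-! Since `∑_{s ≥ 1} s 2^{-(s+1)} = 1`, the real numbers `(m - s0) s 2^{-(s+1)}` sum to at most
`m - s0`, hence so do their floors; the `s0` summands `+ 1` account for the rest, and
`m - s0 ≥ 0` because `m ≥ 2 s0`. -/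

theorem sum_Icc_mul_two_zpow (N : ℕ) :
    ∑ s ∈ Finset.Icc 1 N, (s : ℝ) * (2 : ℝ) ^ (-(s : ℤ) - 1)
      = 1 - ((N : ℝ) + 2) * (2 : ℝ) ^ (-(N : ℤ) - 1) := by
  induction N with
  | zero => norm_num
  | succ N ih =>
    rw [Finset.sum_Icc_succ_top (by omega), ih]
    have hhalf : (2 : ℝ) ^ (-((N + 1 : ℕ) : ℤ) - 1) = (2 : ℝ) ^ (-(N : ℤ) - 1) / 2 := by
      rw [div_eq_mul_inv, ← zpow_sub_one₀ two_ne_zero]; push_cast; ring_nf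
    rw [hhalf, Nat.cast_succ]
    ring

theorem sum_Icc_mul_two_zpow_le_one (N : ℕ) :
    ∑ s ∈ Finset.Icc 1 N, (s : ℝ) * (2 : ℝ) ^ (-(s : ℤ) - 1) ≤ 1 := by
  rw [sum_Icc_mul_two_zpow]
  have : 0 ≤ ((N : ℝ) + 2) * (2 : ℝ) ^ (-(N : ℤ) - 1) := by positivity
  linarith

theorem sum_floor_mul_le {ι : Type*} (t : Finset ι) (k : ℕ) (w : ι → ℝ)
    (hw : ∀ i ∈ t, 0 ≤ w i) (hsum : ∑ i ∈ t, w i ≤ 1) :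
    ∑ i ∈ t, ⌊(k : ℝ) * w i⌋₊ ≤ k := by
  have hk : (0 : ℝ) ≤ k := k.cast_nonneg
  suffices h : ((∑ i ∈ t, ⌊(k : ℝ) * w i⌋₊ : ℕ) : ℝ) ≤ k by exact_mod_cast h
  calc ((∑ i ∈ t, ⌊(k : ℝ) * w i⌋₊ : ℕ) : ℝ)
      ≤ ∑ i ∈ t, (k : ℝ) * w i := by
        push_cast
        exact Finset.sum_le_sum fun i hi => Nat.floor_le (mul_nonneg hk (hw i hi))
    _ = k * ∑ i ∈ t, w i := (Finset.mul_sum ..).symm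
    _ ≤ k := mul_le_of_le_one_right hk hsum

theorem stmt_2_general (s0 m : ℕ) (hm : 2 * s0 ≤ m)
    (ms : ℕ → ℕ)
    (hms : ∀ s, ms s = ⌊((m : ℝ) - s0) * s * (2 : ℝ) ^ (-(s : ℤ) - 1)⌋₊ + 1) :
    ∑ s ∈ Finset.Icc 1 s0, ms s ≤ m := by
  have hs0m : s0 ≤ m := by omega
  have hfloors : ∑ s ∈ Finset.Icc 1 s0, ⌊((m : ℝ) - s0) * s * (2 : ℝ) ^ (-(s : ℤ) - 1)⌋₊
      ≤ m - s0 := by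
    have := sum_floor_mul_le (Finset.Icc 1 s0) (m - s0)
      (fun s => (s : ℝ) * (2 : ℝ) ^ (-(s : ℤ) - 1)) (fun _ _ => by positivity)
      (sum_Icc_mul_two_zpow_le_one s0)
    simpa only [Nat.cast_sub hs0m, mul_assoc] using this
  calc ∑ s ∈ Finset.Icc 1 s0, ms s
      = ∑ s ∈ Finset.Icc 1 s0, ⌊((m : ℝ) - s0) * s * (2 : ℝ) ^ (-(s : ℤ) - 1)⌋₊ + s0 := by
        simp [hms, Finset.sum_add_distrib]
    _ ≤ m := by omega

theorem stmt_2 (n s0 m : ℕ) (hn : n = 2 ^ s0) (hm : 2 * s0 ≤ m)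
    (ms : ℕ → ℕ)
    (hms : ∀ s, ms s = ⌊((m : ℝ) - s0) * s * (2 : ℝ) ^ (-(s : ℤ) - 1)⌋₊ + 1) :
    ∑ s ∈ Finset.Icc 1 s0, ms s ≤ m :=
  stmt_2_general s0 m hm ms hms
end

section
/- Suppose μ, n, m are positive reals with μ ≥ √((16n/m)·log(1/(2δ)+1)) for some δ > 0, and m_s ≥ (m/2)·s·2^{-(s+1)} for s = 1,…,s0. Then (1/2)·∑_{s=1}^{s0} exp(−m_s·μ²·2^s/(4n)) ≤ δ. -/
lemma geom_aux {r : ℝ} (h0 : 0 ≤ r) (h1 : r < 1) (k : ℕ) :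
    ∑ i ∈ Finset.range k, r ^ i ≤ 1 / (1 - r) := by
  rw [geom_sum_eq h1.ne k]
  rw [show (r ^ k - 1) / (r - 1) = (1 - r ^ k) / (1 - r) by rw [← neg_div_neg_eq]; ring_nf]
  rw [div_le_div_iff₀ (by linarith) (by linarith)]
  nlinarith [pow_nonneg h0 k]

theorem stmt_9 (μ n m δ : ℝ) (hμ : 0 < μ) (hn : 0 < n) (hm : 0 < m) (hδ : 0 < δ)
    (hμge : Real.sqrt ((16 * n / m) * Real.log (1 / (2 * δ) + 1)) ≤ μ)
    (s0 : ℕ) (hs0 : 1 ≤ s0) (ms : ℕ → ℝ)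
    (hms : ∀ s ∈ Finset.Icc 1 s0, (m / 2) * s * (2 : ℝ) ^ (-(s : ℤ) - 1) ≤ ms s) :
    (1 / 2) * ∑ s ∈ Finset.Icc 1 s0,
      Real.exp (-(ms s * μ ^ 2 * 2 ^ s) / (4 * n)) ≤ δ := by
  set L := Real.log (1 / (2 * δ) + 1) with hL
  have h2δ : (0:ℝ) < 1 / (2 * δ) := by positivity
  have hLpos : 0 < L := Real.log_pos (by linarith)
  -- from hμge get (16n/m)L ≤ μ²
  have hXnn : 0 ≤ (16 * n / m) * L := by positivity
  have hX : (16 * n / m) * L ≤ μ ^ 2 := by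
    have h1 := Real.sq_sqrt hXnn
    nlinarith [Real.sqrt_nonneg ((16 * n / m) * L)]
  set a : ℝ := m * μ ^ 2 / (16 * n) with ha
  have haL : L ≤ a := by
    rw [ha, le_div_iff₀ (by positivity)]
    rw [div_mul_eq_mul_div, div_le_iff₀ hm] at hX
    nlinarith
  have hapos : 0 < a := lt_of_lt_of_le hLpos haL
  set r : ℝ := Real.exp (-a) with hr
  have hr0 : 0 ≤ r := (Real.exp_pos _).le
  have hr1 : r < 1 := Real.exp_lt_one_iff.mpr (by linarith)
  have hrδ : r * (1 + 2 * δ) ≤ 2 * δ := by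
    have h1 : r ≤ Real.exp (-L) := Real.exp_le_exp.mpr (by linarith)
    have h2 : Real.exp (-L) = (1 / (2 * δ) + 1)⁻¹ := by
      rw [Real.exp_neg, hL, Real.exp_log (by linarith)]
    have h3 : (1 / (2 * δ) + 1)⁻¹ = 2 * δ / (1 + 2 * δ) := by
      field_simp
    rw [h2, h3] at h1
    rw [le_div_iff₀ (by linarith)] at h1
    exact h1
  -- termwise bound
  have hterm : ∀ s ∈ Finset.Icc 1 s0,
      Real.exp (-(ms s * μ ^ 2 * 2 ^ s) / (4 * n)) ≤ r ^ s := by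
    intro s hs
    have hpow : (0:ℝ) < 2 ^ s := by positivity
    have hzp : (2:ℝ) ^ (-(s : ℤ) - 1) = ((2:ℝ) ^ s)⁻¹ / 2 := by
      rw [zpow_sub₀ (by norm_num : (2:ℝ) ≠ 0), zpow_neg, zpow_natCast, zpow_one]
    have hkey : m * s / 4 ≤ ms s * 2 ^ s := by
      have h := hms s hs
      rw [hzp] at h
      have := mul_le_mul_of_nonneg_right h hpow.le
      have heq : m / 2 * s * (((2:ℝ) ^ s)⁻¹ / 2) * 2 ^ s = m * s / 4 := by
        field_simp; ring
      linarith [heq ▸ this]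
    have hkey2 : m * s / 4 * μ ^ 2 ≤ ms s * μ ^ 2 * 2 ^ s := by
      nlinarith [mul_le_mul_of_nonneg_right hkey (sq_nonneg μ)]
    have hexp : -(ms s * μ ^ 2 * 2 ^ s) / (4 * n) ≤ (s : ℝ) * (-a) := by
      rw [div_le_iff₀ (by positivity : (0:ℝ) < 4 * n)]
      have hcalc : (s:ℝ) * (-a) * (4 * n) = -(s * m * μ ^ 2 / 4) := by
        rw [ha]; field_simp; ring
      rw [hcalc]
      nlinarith
    calc Real.exp (-(ms s * μ ^ 2 * 2 ^ s) / (4 * n))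
        ≤ Real.exp ((s : ℝ) * (-a)) := Real.exp_le_exp.mpr hexp
      _ = r ^ s := by rw [hr, ← Real.exp_nat_mul]
  have hsum1 : ∑ s ∈ Finset.Icc 1 s0,
      Real.exp (-(ms s * μ ^ 2 * 2 ^ s) / (4 * n)) ≤ ∑ s ∈ Finset.Icc 1 s0, r ^ s :=
    Finset.sum_le_sum hterm
  have hsum2 : ∑ s ∈ Finset.Icc 1 s0, r ^ s ≤ r * (1 / (1 - r)) := by
    rw [← Finset.Ico_add_one_right_eq_Icc, Finset.sum_Ico_eq_sum_range]
    have : ∀ i ∈ Finset.range (s0 + 1 - 1), r ^ (1 + i) = r * r ^ i := by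
      intro i _; rw [pow_add, pow_one]
    rw [Finset.sum_congr rfl this, ← Finset.mul_sum]
    exact mul_le_mul_of_nonneg_left (geom_aux hr0 hr1 _) hr0
  have hfin : r * (1 / (1 - r)) ≤ 2 * δ := by
    rw [mul_one_div, div_le_iff₀ (by linarith)]
    nlinarith
  linarith
end
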